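/- Let n ≥ 1, ε > 0, ω_1,…,ω_n > 0, δ_1,…,δ_n ∈ {−1,0,1}, and V(x) := Σ_{j=1}^n δ_j (ω_j²/2) x_j². For each j define g_j, h_j : ℝ → ℝ by: (g_j(t), h_j(t)) = (sinh(ω_j t)/ω_j, cosh(ω_j t)) if δ_j = −1; (t, 1) if δ_j = 0; (sin(ω_j t)/ω_j, cos(ω_j t)) if δ_j = +1. For a smooth u : ℝ × ℝⁿ → ℂ define (J_j u)(t,x) := −δ_j ω_j² g_j(t) (x_j/ε) u(t,x) + i h_j(t) ∂_{x_j}u(t,x) and (H_j u)(t,x) := h_j(t) x_j u(t,x) + i ε g_j(t) ∂_{x_j}u(t,x). Then for every smooth u and every j, writing L u := iε∂_t u + (ε²/2)Δu − V u, one has the pointwise commutation identities L(J_j u) = J_j(L u) and L(H_j u) = H_j(L u) on ℝ × ℝⁿ. -/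

import Mathlib

open MeasureTheory Real Complex
open scoped ENNReal NNReal

noncomputable section

/-- `ℝⁿ`: n-dimensional Euclidean space. -/
abbrev Eucl (n : ℕ) := EuclideanSpace ℝ (Fin n)

/-- Partial derivative in the `j`-th coordinate direction. -/
def pd {n : ℕ} (j : Fin n) (f : Eucl n → ℂ) (x : Eucl n) : ℂ :=
  fderiv ℝ f x (EuclideanSpace.single j 1)

/-- Laplacian in the space variables. -/
def lap {n : ℕ} (f : Eucl n → ℂ) (x : Eucl n) : ℂ := ∑ j, pd j (pd j f) x

/-- The function `g_j`: `sinh(ωt)/ω` if `δ = −1`, `t` if `δ = 0`, `sin(ωt)/ω` if `δ = +1`. -/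
def gfun (δ ω t : ℝ) : ℝ :=
  if δ = -1 then Real.sinh (ω*t) / ω else if δ = 0 then t else Real.sin (ω*t) / ω

/-- The function `h_j`: `cosh(ωt)` if `δ = −1`, `1` if `δ = 0`, `cos(ωt)` if `δ = +1`. -/
def hfun (δ ω t : ℝ) : ℝ :=
  if δ = -1 then Real.cosh (ω*t) else if δ = 0 then 1 else Real.cos (ω*t)

/-- The Heisenberg observable `J_j`:
`(J_j u)(t,x) = −δ_j ω_j² g_j(t) (x_j/ε) u(t,x) + i h_j(t) ∂_{x_j} u(t,x)`. -/
def Jop {n : ℕ} (ε : ℝ) (δ ω : Fin n → ℝ) (j : Fin n) (u : ℝ → Eucl n → ℂ) :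
    ℝ → Eucl n → ℂ :=
  fun t x => ((-(δ j) * (ω j)^2 * gfun (δ j) (ω j) t * (x j / ε) : ℝ) : ℂ) * u t x +
    Complex.I * ((hfun (δ j) (ω j) t : ℝ) : ℂ) * pd j (u t) x

/-- The Heisenberg observable `H_j`:
`(H_j u)(t,x) = h_j(t) x_j u(t,x) + i ε g_j(t) ∂_{x_j} u(t,x)`. -/
def Hop {n : ℕ} (ε : ℝ) (δ ω : Fin n → ℝ) (j : Fin n) (u : ℝ → Eucl n → ℂ) :
    ℝ → Eucl n → ℂ :=
  fun t x => ((hfun (δ j) (ω j) t * x j : ℝ) : ℂ) * u t x +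
    Complex.I * ε * ((gfun (δ j) (ω j) t : ℝ) : ℂ) * pd j (u t) x

/-- The linear Schrödinger operator `L u = iε∂ₜu + (ε²/2)Δu − V u`. -/
def Lop {n : ℕ} (ε : ℝ) (V : Eucl n → ℝ) (u : ℝ → Eucl n → ℂ) : ℝ → Eucl n → ℂ :=
  fun t x => Complex.I * ε * deriv (fun s => u s x) t + (ε^2/2) * lap (u t) x -
    ((V x : ℝ) : ℂ) * u t x

/-! Both `J_j` and `H_j` have the form `a(t) x_j + b(t) ∂_j`. Commuting `L` past such an operator
leaves the commutators `[iε∂ₜ, a x_j] = iε a' x_j`, `[(ε²/2)Δ, a x_j] = ε² a ∂_j`,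
`[iε∂ₜ, b ∂_j] = iε b' ∂_j` and `[-V, b ∂_j] = b ∂_jV = δ_j ω_j² b x_j`, so `L` commutes with it
exactly when `iε a' + δ_j ω_j² b = 0` and `iε b' + ε² a = 0`. For `J_j` and `H_j` these reduce to
`g_j' = h_j` and `h_j' = -δ_j ω_j² g_j`. The only analytic input is the symmetry of second
derivatives of the smooth function `(t, x) ↦ u(t, x)`. -/

open Function

theorem fderiv_fderiv_apply_comm {E F : Type*} [NormedAddCommGroup E] [NormedSpace ℝ E]
    [NormedAddCommGroup F] [NormedSpace ℝ F] {f : E → F} {x : E} (hf : ContDiffAt ℝ 2 f x)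
    (v w : E) :
    fderiv ℝ (fun y => fderiv ℝ f y v) x w = fderiv ℝ (fun y => fderiv ℝ f y w) x v := by
  have hf' : DifferentiableAt ℝ (fderiv ℝ f) x :=
    (hf.fderiv_right (m := 1) le_rfl).differentiableAt one_ne_zero
  rw [fderiv_clm_apply hf' (differentiableAt_const v),
    fderiv_clm_apply hf' (differentiableAt_const w)]
  simpa using hf.isSymmSndFDerivAt (by simp) w v

section PartialDerivatives

variable {n : ℕ} {f g : Eucl n → ℂ} {x : Eucl n}

theorem pd_fun_add (j : Fin n) (hf : DifferentiableAt ℝ f x) (hg : DifferentiableAt ℝ g x) :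
    pd j (fun y => f y + g y) x = pd j f x + pd j g x := by
  simp [pd, fderiv_fun_add hf hg]

theorem pd_fun_sub (j : Fin n) (hf : DifferentiableAt ℝ f x) (hg : DifferentiableAt ℝ g x) :
    pd j (fun y => f y - g y) x = pd j f x - pd j g x := by
  simp [pd, fderiv_fun_sub hf hg]

theorem pd_fun_mul (j : Fin n) (hf : DifferentiableAt ℝ f x) (hg : DifferentiableAt ℝ g x) :
    pd j (fun y => f y * g y) x = pd j f x * g x + f x * pd j g x := by
  simp only [pd, fderiv_fun_mul hf hg, add_apply,
    smul_apply, smul_eq_mul]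
  ring

theorem pd_const_mul (j : Fin n) (c : ℂ) (hf : DifferentiableAt ℝ f x) :
    pd j (fun y => c * f y) x = c * pd j f x := by
  simp [pd, fderiv_const_mul hf]

theorem pd_fun_sum {ι : Type*} (s : Finset ι) {F : ι → Eucl n → ℂ} (j : Fin n)
    (hF : ∀ i ∈ s, DifferentiableAt ℝ (F i) x) :
    pd j (fun y => ∑ i ∈ s, F i y) x = ∑ i ∈ s, pd j (F i) x := by
  simp [pd, fderiv_fun_sum hF]

theorem pd_coord (j k : Fin n) :
    pd k (fun y : Eucl n => ((y j : ℝ) : ℂ)) x = if k = j then 1 else 0 := by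
  have hcoord : HasFDerivAt (fun y : Eucl n => ((y j : ℝ) : ℂ))
      (Complex.ofRealCLM.comp (EuclideanSpace.proj j)) x :=
    (Complex.ofRealCLM.comp (EuclideanSpace.proj j)).hasFDerivAt
  simp only [pd, hcoord.fderiv]
  split_ifs <;> simp [*, Ne.symm]

theorem contDiff_ofReal_coord (j : Fin n) :
    ContDiff ℝ (⊤ : ℕ∞) (fun y : Eucl n => ((y j : ℝ) : ℂ)) :=
  Complex.ofRealCLM.contDiff.comp (EuclideanSpace.proj j : Eucl n →L[ℝ] ℝ).contDiff

theorem pd_ofReal_quadratic (c : Fin n → ℝ) (j : Fin n) :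
    pd j (fun y : Eucl n => ((∑ m, c m * y m ^ 2 : ℝ) : ℂ)) x = 2 * c j * x j := by
  have hcoord : ∀ m, DifferentiableAt ℝ (fun y : Eucl n => ((y m : ℝ) : ℂ)) x :=
    fun m => by fun_prop
  have hterm : ∀ m, pd j (fun y => (c m : ℂ) * (((y m : ℝ) : ℂ) * ((y m : ℝ) : ℂ))) x
      = if j = m then 2 * (c j : ℂ) * (x j : ℂ) else 0 := by
    intro m
    rw [pd_const_mul _ _ ((hcoord m).fun_mul (hcoord m)), pd_fun_mul _ (hcoord m) (hcoord m),
      pd_coord]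
    split_ifs with h
    · subst h; ring
    · simp
  simp_rw [Complex.ofReal_sum, Complex.ofReal_mul, Complex.ofReal_pow, sq]
  rw [pd_fun_sum _ _ fun m _ => ((hcoord m).fun_mul (hcoord m)).const_mul _]
  simp [hterm]

theorem contDiff_pd (hf : ContDiff ℝ (⊤ : ℕ∞) f) (j : Fin n) : ContDiff ℝ (⊤ : ℕ∞) (pd j f) :=
  (hf.fderiv_right le_rfl).clm_apply contDiff_const

theorem differentiableAt_pd (hf : ContDiff ℝ (⊤ : ℕ∞) f) (j : Fin n) :
    DifferentiableAt ℝ (pd j f) x :=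
  (contDiff_pd hf j).differentiable (by simp) x

theorem pd_comm (hf : ContDiff ℝ (⊤ : ℕ∞) f) (j k : Fin n) : pd j (pd k f) = pd k (pd j f) :=
  funext fun _ => fderiv_fderiv_apply_comm (hf.contDiffAt.of_le (by norm_cast)) _ _

theorem pd_lap_comm (hf : ContDiff ℝ (⊤ : ℕ∞) f) (j : Fin n) : pd j (lap f) x = lap (pd j f) x := by
  rw [show lap f = fun y => ∑ k, pd k (pd k f) y from rfl,
    pd_fun_sum _ _ fun k _ => differentiableAt_pd (contDiff_pd hf k) k, lap]
  refine Finset.sum_congr rfl fun k _ => ?_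
  rw [pd_comm (contDiff_pd hf k), pd_comm hf j k]

theorem contDiff_lap (hf : ContDiff ℝ (⊤ : ℕ∞) f) : ContDiff ℝ (⊤ : ℕ∞) (lap f) :=
  ContDiff.sum fun k _ => contDiff_pd (contDiff_pd hf k) k

theorem lap_fun_add (hf : ContDiff ℝ (⊤ : ℕ∞) f) (hg : ContDiff ℝ (⊤ : ℕ∞) g) :
    lap (fun y => f y + g y) x = lap f x + lap g x := by
  have hpd : ∀ k, pd k (fun y => f y + g y) = fun y => pd k f y + pd k g y := fun k =>
    funext fun y => pd_fun_add k (hf.differentiable (by simp) y) (hg.differentiable (by simp) y)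
  simp only [lap, hpd, ← Finset.sum_add_distrib]
  exact Finset.sum_congr rfl fun k _ =>
    pd_fun_add k (differentiableAt_pd hf k) (differentiableAt_pd hg k)

theorem lap_const_mul (hf : ContDiff ℝ (⊤ : ℕ∞) f) (c : ℂ) :
    lap (fun y => c * f y) x = c * lap f x := by
  have hpd : ∀ k, pd k (fun y => c * f y) = fun y => c * pd k f y := fun k =>
    funext fun y => pd_const_mul k c (hf.differentiable (by simp) y)
  simp only [lap, hpd, Finset.mul_sum]
  exact Finset.sum_congr rfl fun k _ => pd_const_mul k c (differentiableAt_pd hf k)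

theorem lap_coord_mul (hf : ContDiff ℝ (⊤ : ℕ∞) f) (j : Fin n) :
    lap (fun y => ((y j : ℝ) : ℂ) * f y) x = x j * lap f x + 2 * pd j f x := by
  have hcoord : Differentiable ℝ (fun y : Eucl n => ((y j : ℝ) : ℂ)) := by fun_prop
  have hf' := hf.differentiable (by simp)
  have hpd : ∀ k, pd k (fun y => ((y j : ℝ) : ℂ) * f y)
      = fun y => (if k = j then 1 else 0) * f y + ((y j : ℝ) : ℂ) * pd k f y := fun k =>
    funext fun y => by rw [pd_fun_mul k (hcoord y) (hf' y), pd_coord]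
  have hpd2 : ∀ k, pd k (pd k (fun y => ((y j : ℝ) : ℂ) * f y)) x
      = 2 * (if k = j then pd j f x else 0) + x j * pd k (pd k f) x := fun k => by
    rw [hpd, pd_fun_add k ((hf' x).const_mul _) ((hcoord x).fun_mul (differentiableAt_pd hf k)),
      pd_const_mul k _ (hf' x), pd_fun_mul k (hcoord x) (differentiableAt_pd hf k), pd_coord]
    split_ifs with h
    · subst h; ring
    · ring
  simp only [lap, hpd2, Finset.sum_add_distrib, ← Finset.mul_sum, Finset.sum_ite_eq',
    Finset.mem_univ, if_true]
  ring

end PartialDerivatives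

section SpaceTime

variable {n : ℕ} {u : ℝ → Eucl n → ℂ} {t : ℝ} {x : Eucl n}

theorem pd_eq_fderiv_uncurry (hu : DifferentiableAt ℝ (uncurry u) (t, x)) (j : Fin n) :
    pd j (u t) x = fderiv ℝ (uncurry u) (t, x) (0, EuclideanSpace.single j 1) := by
  have hslice : HasFDerivAt (fun y : Eucl n => (t, y)) ((0 : Eucl n →L[ℝ] ℝ).prod (.id ℝ _)) x :=
    (hasFDerivAt_const t x).prodMk (hasFDerivAt_id x)
  rw [pd, show u t = uncurry u ∘ fun y => (t, y) from rfl,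
    (hu.hasFDerivAt.comp x hslice).fderiv]
  simp

theorem hasDerivAt_of_uncurry (hu : DifferentiableAt ℝ (uncurry u) (t, x)) :
    HasDerivAt (fun s => u s x) (fderiv ℝ (uncurry u) (t, x) (1, 0)) t := by
  have hslice : HasFDerivAt (fun s : ℝ => (s, x)) ((ContinuousLinearMap.id ℝ ℝ).prod 0) t :=
    (hasFDerivAt_id t).prodMk (hasFDerivAt_const x t)
  exact (hu.hasFDerivAt.comp t hslice).hasDerivAt

theorem uncurry_pd_eq (hu : Differentiable ℝ (uncurry u)) (j : Fin n) :
    uncurry (fun t => pd j (u t))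
      = fun p => fderiv ℝ (uncurry u) p (0, EuclideanSpace.single j 1) :=
  funext fun p => pd_eq_fderiv_uncurry (hu p) j

theorem uncurry_deriv_eq (hu : Differentiable ℝ (uncurry u)) :
    uncurry (fun t x => deriv (fun s => u s x) t) = fun p => fderiv ℝ (uncurry u) p (1, 0) :=
  funext fun p => (hasDerivAt_of_uncurry (hu p)).deriv

theorem contDiff_slice (hu : ContDiff ℝ (⊤ : ℕ∞) (uncurry u)) (t : ℝ) :
    ContDiff ℝ (⊤ : ℕ∞) (u t) :=
  hu.comp (contDiff_const.prodMk contDiff_id)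

theorem contDiff_uncurry_pd (hu : ContDiff ℝ (⊤ : ℕ∞) (uncurry u)) (j : Fin n) :
    ContDiff ℝ (⊤ : ℕ∞) (uncurry fun t => pd j (u t)) := by
  rw [uncurry_pd_eq (hu.differentiable (by simp))]
  exact (hu.fderiv_right le_rfl).clm_apply contDiff_const

theorem contDiff_uncurry_deriv (hu : ContDiff ℝ (⊤ : ℕ∞) (uncurry u)) :
    ContDiff ℝ (⊤ : ℕ∞) (uncurry fun t x => deriv (fun s => u s x) t) := by
  rw [uncurry_deriv_eq (hu.differentiable (by simp))]
  exact (hu.fderiv_right le_rfl).clm_apply contDiff_const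

theorem deriv_pd_comm (hu : ContDiff ℝ (⊤ : ℕ∞) (uncurry u)) (j : Fin n) :
    deriv (fun s => pd j (u s) x) t = pd j (fun y => deriv (fun s => u s y) t) x := by
  have hdiff := hu.differentiable (by simp)
  calc deriv (fun s => pd j (u s) x) t
      = fderiv ℝ (uncurry fun t => pd j (u t)) (t, x) (1, 0) :=
        (hasDerivAt_of_uncurry ((contDiff_uncurry_pd hu j).differentiable (by simp) _)).deriv
    _ = fderiv ℝ (fun p => fderiv ℝ (uncurry u) p (1, 0)) (t, x)
          (0, EuclideanSpace.single j 1) := by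
        rw [uncurry_pd_eq hdiff]
        exact fderiv_fderiv_apply_comm (hu.contDiffAt.of_le (by norm_cast)) _ _
    _ = pd j (fun y => deriv (fun s => u s y) t) x := by
        rw [← uncurry_deriv_eq hdiff,
          pd_eq_fderiv_uncurry ((contDiff_uncurry_deriv hu).differentiable (by simp) _)]

end SpaceTime

def posMomOp {n : ℕ} (j : Fin n) (a b : ℝ → ℂ) (u : ℝ → Eucl n → ℂ) : ℝ → Eucl n → ℂ :=
  fun t x => a t * x j * u t x + b t * pd j (u t) x

section PosMomOp

variable {n : ℕ} {u : ℝ → Eucl n → ℂ} {a b : ℝ → ℂ} {α β : ℂ} {t : ℝ} {x : Eucl n}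

theorem deriv_posMomOp (hu : ContDiff ℝ (⊤ : ℕ∞) (uncurry u)) (ha : HasDerivAt a α t)
    (hb : HasDerivAt b β t) (j : Fin n) :
    deriv (fun s => posMomOp j a b u s x) t
      = α * x j * u t x + β * pd j (u t) x
        + posMomOp j a b (fun s y => deriv (fun s' => u s' y) s) t x := by
  have hut : HasDerivAt (fun s => u s x) (deriv (fun s => u s x) t) t :=
    (hasDerivAt_of_uncurry (hu.differentiable (by simp) _)).differentiableAt.hasDerivAt
  have hpdt : HasDerivAt (fun s => pd j (u s) x)
      (pd j (fun y => deriv (fun s => u s y) t) x) t := by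
    rw [← deriv_pd_comm hu]
    exact (hasDerivAt_of_uncurry
      ((contDiff_uncurry_pd hu j).differentiable (by simp) _)).differentiableAt.hasDerivAt
  simp only [posMomOp]
  rw [(((ha.mul_const (x j : ℂ)).fun_mul hut).fun_add (hb.fun_mul hpdt)).deriv]
  ring

theorem lap_posMomOp (hu : ContDiff ℝ (⊤ : ℕ∞) (uncurry u)) (j : Fin n) :
    lap (posMomOp j a b u t) x
      = posMomOp j a b (fun s => lap (u s)) t x + 2 * a t * pd j (u t) x := by
  have hf := contDiff_slice hu t
  rw [show posMomOp j a b u t = fun y => a t * (y j * u t y) + b t * pd j (u t) y from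
    funext fun y => by simp only [posMomOp, mul_assoc]]
  simp only [posMomOp]
  rw [lap_fun_add (contDiff_const.mul ((contDiff_ofReal_coord j).mul hf))
      (contDiff_const.mul (contDiff_pd hf j)),
    lap_const_mul ((contDiff_ofReal_coord j).mul hf), lap_const_mul (contDiff_pd hf j),
    lap_coord_mul hf, pd_lap_comm hf]
  ring

theorem pd_Lop (hu : ContDiff ℝ (⊤ : ℕ∞) (uncurry u)) (ε : ℝ) {V : Eucl n → ℝ}
    (hV : DifferentiableAt ℝ V x) (j : Fin n) :
    pd j (Lop ε V u t) x
      = Lop ε V (fun s => pd j (u s)) t x - pd j (fun y => ((V y : ℝ) : ℂ)) x * u t x := by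
  have hf := contDiff_slice hu t
  have hut : DifferentiableAt ℝ (u t) x := hf.differentiable (by simp) x
  have hdt : DifferentiableAt ℝ (fun y => deriv (fun s => u s y) t) x :=
    (contDiff_slice (contDiff_uncurry_deriv hu) t).differentiable (by simp) x
  have hlap : DifferentiableAt ℝ (lap (u t)) x := (contDiff_lap hf).differentiable (by simp) x
  have hVc : DifferentiableAt ℝ (fun y => ((V y : ℝ) : ℂ)) x := by fun_prop
  rw [show Lop ε V u t = fun y => I * ε * deriv (fun s => u s y) t + (ε ^ 2 / 2) * lap (u t) y
      - ((V y : ℝ) : ℂ) * u t y from rfl,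
    pd_fun_sub j ((hdt.const_mul _).fun_add (hlap.const_mul _)) (hVc.fun_mul hut),
    pd_fun_add j (hdt.const_mul _) (hlap.const_mul _), pd_const_mul j _ hdt,
    pd_const_mul j _ hlap, pd_fun_mul j hVc hut, ← deriv_pd_comm hu, pd_lap_comm hf]
  simp only [Lop]
  ring

theorem Lop_posMomOp (hu : ContDiff ℝ (⊤ : ℕ∞) (uncurry u)) (ε : ℝ) {V : Eucl n → ℝ}
    (hV : DifferentiableAt ℝ V x) (ha : HasDerivAt a α t) (hb : HasDerivAt b β t)
    (j : Fin n) :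
    Lop ε V (posMomOp j a b u) t x
      = posMomOp j a b (Lop ε V u) t x
        + (I * ε * α * x j + b t * pd j (fun y => ((V y : ℝ) : ℂ)) x) * u t x
        + (I * ε * β + ε ^ 2 * a t) * pd j (u t) x := by
  rw [show Lop ε V (posMomOp j a b u) t x = I * ε * deriv (fun s => posMomOp j a b u s x) t
      + (ε ^ 2 / 2) * lap (posMomOp j a b u t) x - ((V x : ℝ) : ℂ) * posMomOp j a b u t x
      from rfl,
    deriv_posMomOp hu ha hb, lap_posMomOp hu]
  simp only [posMomOp]
  rw [pd_Lop hu ε hV]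
  simp only [Lop]
  rw [deriv_pd_comm hu, pd_lap_comm (contDiff_slice hu t)]
  ring

theorem Lop_quadratic_posMomOp (hu : ContDiff ℝ (⊤ : ℕ∞) (uncurry u)) (ε : ℝ) (c : Fin n → ℝ)
    (ha : HasDerivAt a α t) (hb : HasDerivAt b β t) (j : Fin n)
    (hab : I * ε * α + 2 * c j * b t = 0) (hba : I * ε * β + ε ^ 2 * a t = 0) :
    Lop ε (fun y => ∑ m, c m * y m ^ 2) (posMomOp j a b u) t x
      = posMomOp j a b (Lop ε (fun y => ∑ m, c m * y m ^ 2) u) t x := by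
  rw [Lop_posMomOp hu ε (by fun_prop) ha hb, pd_ofReal_quadratic, hba]
  linear_combination (x j * u t x) * hab

end PosMomOp

section Coefficients

variable {δ ω : ℝ}

theorem hasDerivAt_gfun (hω : ω ≠ 0) (t : ℝ) : HasDerivAt (gfun δ ω) (hfun δ ω t) t := by
  have hlin : HasDerivAt (fun s => ω * s) ω t := by simpa using (hasDerivAt_id t).const_mul ω
  unfold gfun hfun
  split_ifs
  · exact (((Real.hasDerivAt_sinh _).comp t hlin).div_const ω).congr_deriv (by field_simp)
  · exact hasDerivAt_id t
  · exact (((Real.hasDerivAt_sin _).comp t hlin).div_const ω).congr_deriv (by field_simp)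

theorem hasDerivAt_hfun (hδ : δ = -1 ∨ δ = 0 ∨ δ = 1) (hω : ω ≠ 0) (t : ℝ) :
    HasDerivAt (hfun δ ω) (-δ * ω ^ 2 * gfun δ ω t) t := by
  have hlin : HasDerivAt (fun s => ω * s) ω t := by simpa using (hasDerivAt_id t).const_mul ω
  rcases hδ with rfl | rfl | rfl <;> unfold hfun gfun <;> norm_num
  · exact ((Real.hasDerivAt_cosh _).comp t hlin).congr_deriv (by field_simp)
  · exact hasDerivAt_const t 1
  · exact ((Real.hasDerivAt_cos _).comp t hlin).congr_deriv (by field_simp)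

end Coefficients

theorem Jop_eq_posMomOp {n : ℕ} (ε : ℝ) (δ ω : Fin n → ℝ) (j : Fin n) (u : ℝ → Eucl n → ℂ) :
    Jop ε δ ω j u = posMomOp j (fun t => ((-(δ j) * ω j ^ 2 * gfun (δ j) (ω j) t / ε : ℝ) : ℂ))
      (fun t => I * hfun (δ j) (ω j) t) u := by
  funext t x
  simp only [Jop, posMomOp]
  push_cast
  ring

theorem Hop_eq_posMomOp {n : ℕ} (ε : ℝ) (δ ω : Fin n → ℝ) (j : Fin n) (u : ℝ → Eucl n → ℂ) :
    Hop ε δ ω j u = posMomOp j (fun t => (hfun (δ j) (ω j) t : ℂ))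
      (fun t => I * ε * gfun (δ j) (ω j) t) u := by
  funext t x
  simp only [Hop, posMomOp]
  push_cast
  ring

theorem heisenberg_observables_commute_general
    (n : ℕ) (ε : ℝ) (hε : 0 < ε)
    (δ ω : Fin n → ℝ) (hδ : ∀ j, δ j = -1 ∨ δ j = 0 ∨ δ j = 1) (hω : ∀ j, 0 < ω j)
    (V : Eucl n → ℝ) (hV : V = fun x => ∑ j, δ j * (ω j)^2 / 2 * (x j)^2)
    (u : ℝ → Eucl n → ℂ)
    (hu : ContDiff ℝ (⊤ : ℕ∞) (fun p : ℝ × Eucl n => u p.1 p.2)) :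
    ∀ j : Fin n, ∀ t : ℝ, ∀ x : Eucl n,
      Lop ε V (Jop ε δ ω j u) t x = Jop ε δ ω j (Lop ε V u) t x ∧
      Lop ε V (Hop ε δ ω j u) t x = Hop ε δ ω j (Lop ε V u) t x := by
  intro j t x
  subst hV
  have hg := hasDerivAt_gfun (δ := δ j) (hω j).ne' t
  have hh := hasDerivAt_hfun (hδ j) (hω j).ne' t
  have hε' : (ε : ℂ) ≠ 0 := by exact_mod_cast hε.ne'
  constructor
  · rw [Jop_eq_posMomOp, Jop_eq_posMomOp]
    refine Lop_quadratic_posMomOp hu ε (fun m => δ m * ω m ^ 2 / 2)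
      ((hg.const_mul (-(δ j) * ω j ^ 2)).div_const ε).ofReal_comp
      (hh.ofReal_comp.const_mul I) j ?_ ?_
    · push_cast
      field_simp
      ring
    · push_cast
      field_simp
      rw [I_sq]
      ring
  · rw [Hop_eq_posMomOp, Hop_eq_posMomOp]
    refine Lop_quadratic_posMomOp hu ε (fun m => δ m * ω m ^ 2 / 2) hh.ofReal_comp
      (hg.ofReal_comp.const_mul (I * ε)) j ?_ ?_
    · push_cast
      ring
    · linear_combination (ε ^ 2 * hfun (δ j) (ω j) t : ℂ) * I_sq

/-- **Commutation of the Heisenberg observables with the quadratic Hamiltonian.**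
For `V(x) = Σ_j δ_j (ω_j²/2) x_j²` with `δ_j ∈ {−1,0,1}`, `ω_j > 0`, and every smooth
`u : ℝ × ℝⁿ → ℂ`, the operators `J_j` and `H_j` commute pointwise with
`L = iε∂ₜ + (ε²/2)Δ − V`. -/
theorem heisenberg_observables_commute
    (n : ℕ) (hn : 1 ≤ n) (ε : ℝ) (hε : 0 < ε)
    (δ ω : Fin n → ℝ) (hδ : ∀ j, δ j = -1 ∨ δ j = 0 ∨ δ j = 1) (hω : ∀ j, 0 < ω j)
    (V : Eucl n → ℝ) (hV : V = fun x => ∑ j, δ j * (ω j)^2 / 2 * (x j)^2)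
    (u : ℝ → Eucl n → ℂ)
    (hu : ContDiff ℝ (⊤ : ℕ∞) (fun p : ℝ × Eucl n => u p.1 p.2)) :
    ∀ j : Fin n, ∀ t : ℝ, ∀ x : Eucl n,
      Lop ε V (Jop ε δ ω j u) t x = Jop ε δ ω j (Lop ε V u) t x ∧
      Lop ε V (Hop ε δ ω j u) t x = Hop ε δ ω j (Lop ε V u) t x :=
  heisenberg_observables_commute_general n ε hε δ ω hδ hω V hV u hu
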